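/- arXiv:2602.12603 — 2 statements merged into one kernel-verified Lean document; each statement's English description precedes it below -/
import Mathlib

section
/- Let E = EuclideanSpace ℝ (Fin m) and let Q : E → ℝ be twice continuously differentiable with Hessian H(u) := ∇²Q(u). Assume ‖H(u) − H(v)‖ ≤ L₂·‖u − v‖ for all u, v (L₂ > 0), ∇Q(u_ref) = 0, W := −H(u_ref), 𝒮 := {u : W(u − u_ref, u − u_ref) ≤ D²} with D > 0, and H(u)(v,v) ≤ −μ²·‖v‖² for all u ∈ 𝒮 and all v (μ > 0). Let 𝒰 ⊆ E, let u_W ∈ 𝒰 minimize u ↦ W(u − u_ref, u − u_ref) over 𝒰, let u_I ∈ 𝒰, and assume u_W, u_I ∈ 𝒮. Write δ := ‖u_W − u_ref‖_W, suppose δ > 0, suppose ‖u_I − u_ref‖_W = β·δ for some β > 1, and set c := (β² − 1)/2. Then Q(u_W) − Q(u_I) ≥ c·δ² − L₂·D³/(3·μ³). -/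
/-! Expanding `Q` to second order at the critical point `u_ref`, with the Lipschitz Hessian
controlling the remainder, gives `Q u = Q u_ref - ‖u - u_ref‖_W² / 2 + r u` with
`|r u| ≤ L₂ ‖u - u_ref‖³ / 6`. The curvature bound at `u_ref` makes `W` coercive,
`W v v ≥ μ² ‖v‖²`, so `‖u - u_ref‖ ≤ D / μ` on `𝒮`. Subtracting the expansions at `u_W` and
`u_I` leaves `(β² - 1) δ² / 2` up to two remainders, each at most `L₂ D³ / (6 μ³)`. -/

open Set

theorem norm_le_of_norm_deriv_le_mul_pow {E : Type*} [NormedAddCommGroup E] [NormedSpace ℝ E]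
    {f f' : ℝ → E} {b C : ℝ} (n : ℕ) (hf : ∀ t ∈ Icc 0 b, HasDerivAt f (f' t) t)
    (h0 : f 0 = 0) (hbound : ∀ t ∈ Ico 0 b, ‖f' t‖ ≤ C * t ^ n) :
    ∀ t ∈ Icc 0 b, ‖f t‖ ≤ C * t ^ (n + 1) / (n + 1) := by
  have hB (t : ℝ) : HasDerivAt (fun t => C * t ^ (n + 1) / (n + 1)) (C * t ^ n) t :=
    (((hasDerivAt_pow (n + 1) t).const_mul C).div_const ((n : ℝ) + 1)).congr_deriv (by
      push_cast
      field_simp)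
  exact image_norm_le_of_norm_deriv_right_le_deriv_boundary
    (fun t ht => (hf t ht).continuousAt.continuousWithinAt)
    (fun t ht => (hf t (Ico_subset_Icc_self ht)).hasDerivWithinAt) (by simp [h0]) hB hbound

theorem abs_sub_taylor_two_le {g g' g'' : ℝ → ℝ} {K : ℝ}
    (hg : ∀ t ∈ Icc (0 : ℝ) 1, HasDerivAt g (g' t) t)
    (hg' : ∀ t ∈ Icc (0 : ℝ) 1, HasDerivAt g' (g'' t) t)
    (hbound : ∀ t ∈ Ico (0 : ℝ) 1, |g'' t - g'' 0| ≤ K * t) :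
    |g 1 - g 0 - g' 0 - g'' 0 / 2| ≤ K / 6 := by
  have hφ : ∀ t ∈ Icc (0 : ℝ) 1, ‖g' t - g' 0 - t * g'' 0‖ ≤ K * t ^ 2 / 2 := by
    simpa [one_add_one_eq_two] using norm_le_of_norm_deriv_le_mul_pow
      (f := fun t => g' t - g' 0 - t * g'' 0) (f' := fun t => g'' t - g'' 0) 1
      (fun t ht => ((hg' t ht).sub_const (g' 0)).sub (hasDerivAt_mul_const (g'' 0)))
      (by simp) (by simpa using hbound)
  have hψ := norm_le_of_norm_deriv_le_mul_pow
    (f := fun t => g t - g 0 - t * g' 0 - t ^ 2 / 2 * g'' 0)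
    (f' := fun t => g' t - g' 0 - t * g'' 0) (C := K / 2) 2
    (fun t ht => ((((hg t ht).sub_const (g 0)).sub (hasDerivAt_mul_const (g' 0))).sub
      (((hasDerivAt_pow 2 t).div_const 2).mul_const (g'' 0))).congr_deriv (by simp))
    (by simp) (fun t ht => by simpa [div_mul_eq_mul_div] using hφ t (Ico_subset_Icc_self ht))
    1 (by simp)
  norm_num at hψ
  calc |g 1 - g 0 - g' 0 - g'' 0 / 2| = |g 1 - g 0 - g' 0 - 1 / 2 * g'' 0| := by ring_nf
    _ ≤ K / 2 / 3 := hψ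
    _ = K / 6 := by ring

theorem abs_taylor_two_remainder_le {E : Type*} [NormedAddCommGroup E] [NormedSpace ℝ E]
    {Q : E → ℝ} {Q' : E → E →L[ℝ] ℝ} {H : E → E →L[ℝ] E →L[ℝ] ℝ} {L : ℝ}
    (hQ : ∀ u, HasFDerivAt Q (Q' u) u) (hQ' : ∀ u, HasFDerivAt Q' (H u) u)
    (hLip : ∀ u w, ‖H u - H w‖ ≤ L * ‖u - w‖) (x v : E) :
    |Q (x + v) - Q x - Q' x v - H x v v / 2| ≤ L * ‖v‖ ^ 3 / 6 := by
  have hline (t : ℝ) : HasDerivAt (fun t : ℝ => x + t • v) v t := by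
    simpa using ((hasDerivAt_id t).smul_const v).const_add x
  have hbound : ∀ t ∈ Ico (0 : ℝ) 1,
      |H (x + t • v) v v - H (x + (0 : ℝ) • v) v v| ≤ L * ‖v‖ ^ 3 * t := by
    intro t ht
    calc |H (x + t • v) v v - H (x + (0 : ℝ) • v) v v|
        = ‖(H (x + t • v) - H x) v v‖ := by simp [Real.norm_eq_abs]
      _ ≤ ‖H (x + t • v) - H x‖ * ‖v‖ * ‖v‖ := ContinuousLinearMap.le_opNorm₂ _ _ _
      _ ≤ L * ‖t • v‖ * ‖v‖ * ‖v‖ := by gcongr; simpa using hLip (x + t • v) x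
      _ = L * ‖v‖ ^ 3 * t := by rw [norm_smul, Real.norm_of_nonneg ht.1]; ring
  simpa using abs_sub_taylor_two_le
    (g := fun t => Q (x + t • v)) (g' := fun t => Q' (x + t • v) v)
    (g'' := fun t => H (x + t • v) v v)
    (fun t _ => (hQ _).comp_hasDerivAt t (hline t))
    (fun t _ => (((hQ' _).comp_hasDerivAt t (hline t)).clm_apply
      (hasDerivAt_const t v)).congr_deriv (by simp))
    hbound

theorem abs_sub_sub_half_hessian_le_of_critical {E : Type*} [NormedAddCommGroup E]
    [NormedSpace ℝ E] {Q : E → ℝ} {Q' : E → E →L[ℝ] ℝ} {H : E → E →L[ℝ] E →L[ℝ] ℝ}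
    {L μ D : ℝ} (hQ : ∀ u, HasFDerivAt Q (Q' u) u) (hQ' : ∀ u, HasFDerivAt Q' (H u) u)
    (hLip : ∀ u w, ‖H u - H w‖ ≤ L * ‖u - w‖) (hL : 0 ≤ L) (hμ : 0 < μ) (hD : 0 ≤ D)
    {x : E} (hx : Q' x = 0) {v : E} (hcoercive : μ ^ 2 * ‖v‖ ^ 2 ≤ -H x v v)
    (hv : -H x v v ≤ D ^ 2) :
    |Q (x + v) - Q x - H x v v / 2| ≤ L * (D / μ) ^ 3 / 6 := by
  have hnorm : ‖v‖ ≤ D / μ := by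
    rw [le_div_iff₀ hμ, mul_comm]
    exact (pow_le_pow_iff_left₀ (by positivity) hD two_ne_zero).mp (by linarith)
  calc |Q (x + v) - Q x - H x v v / 2| = |Q (x + v) - Q x - Q' x v - H x v v / 2| := by
        simp [hx]
    _ ≤ L * ‖v‖ ^ 3 / 6 := abs_taylor_two_remainder_le hQ hQ' hLip x v
    _ ≤ L * (D / μ) ^ 3 / 6 := by gcongr

theorem weighted_vs_euclidean_value_gap_general
    (m : ℕ)
    (Q : EuclideanSpace ℝ (Fin m) → ℝ)
    (hQ : ContDiff ℝ 2 Q)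
    (u_ref : EuclideanSpace ℝ (Fin m))
    (H : EuclideanSpace ℝ (Fin m) →
      EuclideanSpace ℝ (Fin m) →L[ℝ] EuclideanSpace ℝ (Fin m) →L[ℝ] ℝ)
    (hH : ∀ u, H u = fderiv ℝ (fderiv ℝ Q) u)
    (L₂ : ℝ) (hL₂ : 0 < L₂)
    (hLip : ∀ u v, ‖H u - H v‖ ≤ L₂ * ‖u - v‖)
    (hgrad : fderiv ℝ Q u_ref = 0)
    (W : EuclideanSpace ℝ (Fin m) →L[ℝ] EuclideanSpace ℝ (Fin m) →L[ℝ] ℝ)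
    (hW : W = -H u_ref)
    (D : ℝ) (hD : 0 < D)
    (S : Set (EuclideanSpace ℝ (Fin m)))
    (hS : S = {u | W (u - u_ref) (u - u_ref) ≤ D ^ 2})
    (μ : ℝ) (hμ : 0 < μ)
    (hcurv : ∀ u ∈ S, ∀ v : EuclideanSpace ℝ (Fin m),
      H u v v ≤ -μ ^ 2 * ‖v‖ ^ 2)
    (uW uI : EuclideanSpace ℝ (Fin m))
    (huWS : uW ∈ S) (huIS : uI ∈ S)
    (δ : ℝ) (hδ : δ = Real.sqrt (W (uW - u_ref) (uW - u_ref)))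
    (β : ℝ)
    (hβδ : Real.sqrt (W (uI - u_ref) (uI - u_ref)) = β * δ)
    (c : ℝ) (hc : c = (β ^ 2 - 1) / 2) :
    Q uW - Q uI ≥ c * δ ^ 2 - L₂ * D ^ 3 / (3 * μ ^ 3) := by
  subst hc
  have hcoercive (v : EuclideanSpace ℝ (Fin m)) : μ ^ 2 * ‖v‖ ^ 2 ≤ W v v := by
    have := hcurv u_ref (by simp [hS]; positivity) v
    simp only [hW, neg_apply]
    linarith
  have hmodel : ∀ u ∈ S,
      |Q u - Q u_ref + W (u - u_ref) (u - u_ref) / 2| ≤ L₂ * (D / μ) ^ 3 / 6 := by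
    intro u hu
    rw [hS] at hu
    have := abs_sub_sub_half_hessian_le_of_critical
      (fun u => (hQ.differentiable two_ne_zero u).hasFDerivAt)
      (fun u => hH u ▸ ((hQ.fderiv_right (m := 1) one_add_one_eq_two.le).differentiable
        one_ne_zero u).hasFDerivAt) hLip hL₂.le hμ hD.le hgrad
      (v := u - u_ref) (by simpa [hW] using hcoercive (u - u_ref)) (by simpa [hW] using hu.out)
    rw [add_sub_cancel] at this
    simpa only [hW, neg_apply, neg_div, ← sub_eq_add_neg] using this
  have hδsq : δ ^ 2 = W (uW - u_ref) (uW - u_ref) :=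
    hδ ▸ Real.sq_sqrt ((by positivity : (0 : ℝ) ≤ _).trans (hcoercive _))
  have hβδsq : β ^ 2 * δ ^ 2 = W (uI - u_ref) (uI - u_ref) :=
    mul_pow β δ 2 ▸ hβδ ▸ Real.sq_sqrt ((by positivity : (0 : ℝ) ≤ _).trans (hcoercive _))
  have hmodelW := abs_le.mp (hmodel uW huWS)
  have hmodelI := abs_le.mp (hmodel uI huIS)
  have hremainder : L₂ * D ^ 3 / (3 * μ ^ 3) = 2 * (L₂ * (D / μ) ^ 3 / 6) := by ring
  linarith

/-- Theorem 2, bound form: Under A1–A2, with `δ` the weighted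
projection distance of `u_W`, `‖u_I − u_ref‖_W = β·δ` for some `β > 1`, and
`c = (β² − 1)/2`, the value advantage of the Hessian-weighted projection over
any competing feasible action `u_I` satisfies
`Q(u_W) − Q(u_I) ≥ c·δ² − L₂D³/(3μ³)`. -/
theorem weighted_vs_euclidean_value_gap
    (m : ℕ)
    (Q : EuclideanSpace ℝ (Fin m) → ℝ)
    (hQ : ContDiff ℝ 2 Q)
    (u_ref : EuclideanSpace ℝ (Fin m))
    (H : EuclideanSpace ℝ (Fin m) →
      EuclideanSpace ℝ (Fin m) →L[ℝ] EuclideanSpace ℝ (Fin m) →L[ℝ] ℝ)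
    (hH : ∀ u, H u = fderiv ℝ (fderiv ℝ Q) u)
    (L₂ : ℝ) (hL₂ : 0 < L₂)
    (hLip : ∀ u v, ‖H u - H v‖ ≤ L₂ * ‖u - v‖)
    (hgrad : fderiv ℝ Q u_ref = 0)
    (W : EuclideanSpace ℝ (Fin m) →L[ℝ] EuclideanSpace ℝ (Fin m) →L[ℝ] ℝ)
    (hW : W = -H u_ref)
    (D : ℝ) (hD : 0 < D)
    (S : Set (EuclideanSpace ℝ (Fin m)))
    (hS : S = {u | W (u - u_ref) (u - u_ref) ≤ D ^ 2})
    (μ : ℝ) (hμ : 0 < μ)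
    (hcurv : ∀ u ∈ S, ∀ v : EuclideanSpace ℝ (Fin m),
      H u v v ≤ -μ ^ 2 * ‖v‖ ^ 2)
    (𝒰 : Set (EuclideanSpace ℝ (Fin m)))
    (uW uI : EuclideanSpace ℝ (Fin m))
    (huW𝒰 : uW ∈ 𝒰) (huI𝒰 : uI ∈ 𝒰)
    (huWmin : ∀ u ∈ 𝒰, W (uW - u_ref) (uW - u_ref) ≤ W (u - u_ref) (u - u_ref))
    (huWS : uW ∈ S) (huIS : uI ∈ S)
    (δ : ℝ) (hδ : δ = Real.sqrt (W (uW - u_ref) (uW - u_ref)))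
    (hδpos : 0 < δ)
    (β : ℝ) (hβ : 1 < β)
    (hβδ : Real.sqrt (W (uI - u_ref) (uI - u_ref)) = β * δ)
    (c : ℝ) (hc : c = (β ^ 2 - 1) / 2) :
    Q uW - Q uI ≥ c * δ ^ 2 - L₂ * D ^ 3 / (3 * μ ^ 3) :=
  weighted_vs_euclidean_value_gap_general m Q hQ u_ref H hH L₂ hL₂ hLip hgrad W hW D hD S hS μ hμ
    hcurv uW uI huWS huIS δ hδ β hβδ c hc
end

section
/- Let E = EuclideanSpace ℝ (Fin m) and let Q : E → ℝ be twice continuously differentiable with Hessian H(u) := ∇²Q(u) satisfying ‖H(u) − H(v)‖ ≤ L₂·‖u − v‖ for all u, v (L₂ > 0) and ∇Q(u_ref) = 0. Let W := −H(u_ref), 𝒮 := {u : W(u − u_ref, u − u_ref) ≤ D²} with D > 0, assume H(u)(v,v) ≤ −μ²·‖v‖² for all u ∈ 𝒮 and all v (μ > 0), and let G ≥ 0 be such that ‖∇Q(u)‖ ≤ G for all u ∈ 𝒮. Let 𝒰 ⊆ E be convex, let u_W ∈ 𝒰 minimize u ↦ W(u − u_ref, u − u_ref) over 𝒰, let u⋆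 ∈ 𝒰 maximize Q over 𝒰, and let û_W ∈ 𝒰 minimize u ↦ Ŵ(u − u_ref, u − u_ref) over 𝒰 for some symmetric bilinear form Ŵ with ‖Ŵ − W‖ ≤ ρ, 0 ≤ ρ < μ². If u_W, û_W, u⋆ ∈ 𝒮 and the segment from u_W to û_W lies in 𝒮, then |Q(û_W) − Q(u⋆)| ≤ L₂·D³/(3·μ³) + G·√(2ρ)·D/μ². -/
/-!
Near the critical point `u_ref` the value `Q` agrees with its quadratic model
`Q u_ref - W(u - u_ref, u - u_ref) / 2` up to `L₂ ‖u - u_ref‖³ / 6` (second-order Taylor with a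
Lipschitz Hessian: along a segment the remainder vanishes to first order at the base point and
its second derivative grows at most linearly, so two comparison arguments give the cube), and
`‖u - u_ref‖ ≤ D / μ` on `𝒮` because `W` is `μ²`-coercive. Since `u_W` minimizes the model's
quadratic term over `𝒰`, two Taylor errors give `Q u⋆ - Q u_W ≤ L₂ D³ / (3 μ³)`. The variational
inequalities of the two projections give `μ² ‖û_W - u_W‖ ≤ ‖Ŵ - W‖ ‖û_W - u_ref‖ ≤ ρ D / μ`, and
the mean value theorem on the segment converts this distance into a value gap of at most
`G ‖û_W - u_W‖`.
-/

theorem norm_le_mul_pow_succ_div_of_norm_deriv_le {F : Type*} [NormedAddCommGroup F]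
    [NormedSpace ℝ F] {f f' : ℝ → F} {C : ℝ} {n : ℕ} (hf0 : f 0 = 0)
    (hf : ∀ t, HasDerivAt f (f' t) t) (hbound : ∀ t, 0 ≤ t → ‖f' t‖ ≤ C * t ^ n)
    {t : ℝ} (ht : 0 ≤ t) : ‖f t‖ ≤ C * t ^ (n + 1) / (n + 1) := by
  have hB (s : ℝ) : HasDerivAt (fun s : ℝ ↦ C * s ^ (n + 1) / (n + 1)) (C * s ^ n) s := by
    refine (((hasDerivAt_pow (n + 1) s).const_mul C).div_const ((n : ℝ) + 1)).congr_deriv ?_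
    simp only [Nat.add_sub_cancel]
    push_cast
    field_simp
  exact image_norm_le_of_norm_deriv_right_le_deriv_boundary (a := 0)
    (fun s _ ↦ (hf s).continuousAt.continuousWithinAt) (fun s _ ↦ (hf s).hasDerivWithinAt)
    (by simp [hf0]) hB (fun s hs ↦ hbound s hs.1) ⟨ht, le_rfl⟩

theorem norm_taylor_two_remainder_le {E F : Type*} [NormedAddCommGroup E] [NormedSpace ℝ E]
    [NormedAddCommGroup F] [NormedSpace ℝ F] {f : E → F} {f' : E → E →L[ℝ] F}
    {H : E → E →L[ℝ] E →L[ℝ] F} {L : ℝ} {a : E}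
    (hf : ∀ x, HasFDerivAt f (f' x) x) (hf' : ∀ x, HasFDerivAt f' (H x) x)
    (hH : ∀ x, ‖H x - H a‖ ≤ L * ‖x - a‖) (b : E) :
    ‖f b - f a - f' a (b - a) - (1 / 2 : ℝ) • H a (b - a) (b - a)‖ ≤ L * ‖b - a‖ ^ 3 / 6 := by
  set δ := b - a
  have hline (t : ℝ) : HasDerivAt (fun s : ℝ ↦ a + s • δ) δ t := by
    simpa using ((hasDerivAt_id t).smul_const δ).const_add a
  set ψ : ℝ → F := fun t ↦ f' (a + t • δ) δ - f' a δ - t • H a δ δ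
  set φ : ℝ → F := fun t ↦ f (a + t • δ) - f a - t • f' a δ - (t ^ 2 / 2) • H a δ δ
  have hψ (t : ℝ) : HasDerivAt ψ (H (a + t • δ) δ δ - H a δ δ) t := by
    refine ((((hf' _).comp_hasDerivAt t (hline t)).clm_apply (hasDerivAt_const t δ)).sub_const
      (f' a δ)).sub ((hasDerivAt_id t).smul_const (H a δ δ)) |>.congr_deriv ?_
    simp
  have hφ (t : ℝ) : HasDerivAt φ (ψ t) t := by
    refine ((((hf _).comp_hasDerivAt t (hline t)).sub_const (f a)).sub
      ((hasDerivAt_id t).smul_const (f' a δ))).sub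
      (((hasDerivAt_pow 2 t).div_const 2).smul_const (H a δ δ)) |>.congr_deriv ?_
    norm_num [ψ]
  have hψ_le (t : ℝ) (ht : 0 ≤ t) : ‖ψ t‖ ≤ (L * ‖δ‖ ^ 3 / 2) * t ^ 2 := by
    refine (norm_le_mul_pow_succ_div_of_norm_deriv_le (C := L * ‖δ‖ ^ 3) (n := 1) (by simp [ψ]) hψ
      (fun s hs ↦ ?_) ht).trans_eq (by push_cast; ring)
    calc ‖H (a + s • δ) δ δ - H a δ δ‖ = ‖(H (a + s • δ) - H a) δ δ‖ := by simp
      _ ≤ ‖H (a + s • δ) - H a‖ * ‖δ‖ * ‖δ‖ := (H (a + s • δ) - H a).le_opNorm₂ δ δ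
      _ ≤ L * ‖s • δ‖ * ‖δ‖ * ‖δ‖ := by gcongr; simpa using hH (a + s • δ)
      _ = (L * ‖δ‖ ^ 3) * s ^ 1 := by rw [norm_smul, Real.norm_of_nonneg hs]; ring
  have := norm_le_mul_pow_succ_div_of_norm_deriv_le (by simp [φ]) hφ hψ_le zero_le_one
  norm_num [φ, δ] at this ⊢
  linarith

theorem sub_le_of_quadratic_model_le {E : Type*} [NormedAddCommGroup E] [NormedSpace ℝ E]
    {Q : E → ℝ} {Q' : E → E →L[ℝ] ℝ} {H : E → E →L[ℝ] E →L[ℝ] ℝ} {L R : ℝ} {r : E}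
    (hQ : ∀ x, HasFDerivAt Q (Q' x) x) (hQ' : ∀ x, HasFDerivAt Q' (H x) x)
    (hH : ∀ x, ‖H x - H r‖ ≤ L * ‖x - r‖) (hL : 0 ≤ L) (hcrit : Q' r = 0) {u v : E}
    (hu : ‖u - r‖ ≤ R) (hv : ‖v - r‖ ≤ R) (huv : H r (u - r) (u - r) ≤ H r (v - r) (v - r)) :
    Q u - Q v ≤ L * R ^ 3 / 3 := by
  have hmodel {x : E} (hx : ‖x - r‖ ≤ R) :
      |Q x - Q r - H r (x - r) (x - r) / 2| ≤ L * R ^ 3 / 6 := by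
    have := norm_taylor_two_remainder_le hQ hQ' hH x
    rw [hcrit, Real.norm_eq_abs] at this
    refine le_trans (le_of_eq ?_) (this.trans ?_)
    · simp only [zero_apply, sub_zero, smul_eq_mul]
      ring_nf
    · gcongr
  linarith [abs_le.1 (hmodel hu), abs_le.1 (hmodel hv)]

theorem IsMinOn.variational_ineq_of_quadratic {E : Type*} [NormedAddCommGroup E]
    [NormedSpace ℝ E] {B : E →L[ℝ] E →L[ℝ] ℝ} (hB : ∀ v w, B v w = B w v) {s : Set E}
    (hs : Convex ℝ s) {r x u : E} (hmin : IsMinOn (fun y ↦ B (y - r) (y - r)) s x)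
    (hx : x ∈ s) (hu : u ∈ s) : 0 ≤ B (x - r) (u - x) := by
  have hshift : HasFDerivAt (fun y : E ↦ y - r) (ContinuousLinearMap.id ℝ E) x :=
    (hasFDerivAt_id x).sub_const r
  have := hmin.localize.hasFDerivWithinAt_nonneg
    (B.hasFDerivAt_of_bilinear hshift hshift).hasFDerivWithinAt
    (sub_mem_posTangentConeAt_of_segment_subset (hs.segment_subset hx hu))
  simp only [add_apply, ContinuousLinearMap.precompR_apply,
    ContinuousLinearMap.precompL_apply, ContinuousLinearMap.compL_apply,
    ContinuousLinearMap.comp_id, ContinuousLinearMap.id_apply, hB (u - x)] at this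
  linarith

theorem mul_norm_sub_le_of_variational_ineqs {E : Type*} [SeminormedAddCommGroup E]
    [NormedSpace ℝ E] {B B' : E →L[ℝ] E →L[ℝ] ℝ} {c : ℝ} (hB : ∀ v, c * ‖v‖ ^ 2 ≤ B v v)
    {r x x' : E} (hx : 0 ≤ B (x - r) (x' - x)) (hx' : 0 ≤ B' (x' - r) (x - x')) :
    c * ‖x' - x‖ ≤ ‖B' - B‖ * ‖x' - r‖ := by
  set d := x' - x
  have hdd : B d d ≤ ‖B' - B‖ * ‖x' - r‖ * ‖d‖ := by
    have hsplit : B d d = B (x' - r) d - B (x - r) d := by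
      rw [← sub_apply, ← map_sub, sub_sub_sub_cancel_right]
    have hx'd : B' (x' - r) d ≤ 0 := by
      rw [← neg_sub x', map_neg] at hx'; linarith
    calc B d d ≤ -((B' - B) (x' - r) d) := by
          rw [sub_apply, sub_apply]; linarith
      _ ≤ ‖(B' - B) (x' - r) d‖ := neg_le_abs _
      _ ≤ ‖B' - B‖ * ‖x' - r‖ * ‖d‖ := (B' - B).le_opNorm₂ _ _
  rcases (norm_nonneg d).eq_or_lt with hd | hd
  · rw [← hd, mul_zero]; positivity
  · refine le_of_mul_le_mul_right ?_ hd
    nlinarith [hB d]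

theorem mul_norm_sub_le_of_isMinOn_quadratic {E : Type*} [NormedAddCommGroup E]
    [NormedSpace ℝ E] {B B' : E →L[ℝ] E →L[ℝ] ℝ} (hBsymm : ∀ v w, B v w = B w v)
    (hB'symm : ∀ v w, B' v w = B' w v) {c : ℝ} (hB : ∀ v, c * ‖v‖ ^ 2 ≤ B v v) {s : Set E}
    (hs : Convex ℝ s) {r x x' : E} (hx : x ∈ s) (hx' : x' ∈ s)
    (hmin : IsMinOn (fun y ↦ B (y - r) (y - r)) s x)
    (hmin' : IsMinOn (fun y ↦ B' (y - r) (y - r)) s x') :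
    c * ‖x' - x‖ ≤ ‖B' - B‖ * ‖x' - r‖ :=
  mul_norm_sub_le_of_variational_ineqs hB (hmin.variational_ineq_of_quadratic hBsymm hs hx hx')
    (hmin'.variational_ineq_of_quadratic hB'symm hs hx' hx)

theorem le_div_of_sq_mul_sq_le {μ D x : ℝ} (hμ : 0 < μ) (hD : 0 ≤ D) (hx : 0 ≤ x)
    (h : μ ^ 2 * x ^ 2 ≤ D ^ 2) : x ≤ D / μ := by
  rw [le_div_iff₀ hμ, mul_comm]
  exact (pow_le_pow_iff_left₀ (by positivity) hD two_ne_zero).1 (by rwa [mul_pow])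

theorem div_le_sqrt_two_mul {ρ μ : ℝ} (hρ : 0 ≤ ρ) (hμ : 0 < μ) (h : ρ ≤ μ ^ 2) :
    ρ / μ ≤ √(2 * ρ) := by
  rw [div_le_iff₀ hμ]
  calc ρ = √ρ * √ρ := (Real.mul_self_sqrt hρ).symm
    _ ≤ √(2 * ρ) * μ := mul_le_mul (Real.sqrt_le_sqrt (by linarith))
        ((Real.sqrt_le_left hμ.le).2 h) (Real.sqrt_nonneg _) (Real.sqrt_nonneg _)

theorem learned_weighted_projection_near_optimality_general
    (m : ℕ)
    (Q : EuclideanSpace ℝ (Fin m) → ℝ)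
    (hQ : ContDiff ℝ 2 Q)
    (u_ref : EuclideanSpace ℝ (Fin m))
    (H : EuclideanSpace ℝ (Fin m) →
      EuclideanSpace ℝ (Fin m) →L[ℝ] EuclideanSpace ℝ (Fin m) →L[ℝ] ℝ)
    (hH : ∀ u, H u = fderiv ℝ (fderiv ℝ Q) u)
    (L₂ : ℝ) (hL₂ : 0 < L₂)
    (hLip : ∀ u v, ‖H u - H v‖ ≤ L₂ * ‖u - v‖)
    (hgrad : fderiv ℝ Q u_ref = 0)
    (W : EuclideanSpace ℝ (Fin m) →L[ℝ] EuclideanSpace ℝ (Fin m) →L[ℝ] ℝ)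
    (hW : W = -H u_ref)
    (D : ℝ) (hD : 0 < D)
    (S : Set (EuclideanSpace ℝ (Fin m)))
    (hS : S = {u | W (u - u_ref) (u - u_ref) ≤ D ^ 2})
    (μ : ℝ) (hμ : 0 < μ)
    (hcurv : ∀ u ∈ S, ∀ v : EuclideanSpace ℝ (Fin m),
      H u v v ≤ -μ ^ 2 * ‖v‖ ^ 2)
    (G : ℝ)
    (hGbound : ∀ u ∈ S, ‖fderiv ℝ Q u‖ ≤ G)
    (𝒰 : Set (EuclideanSpace ℝ (Fin m))) (h𝒰 : Convex ℝ 𝒰)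
    (uW uStar uhW : EuclideanSpace ℝ (Fin m))
    (huW𝒰 : uW ∈ 𝒰) (huStar𝒰 : uStar ∈ 𝒰) (huhW𝒰 : uhW ∈ 𝒰)
    (huWmin : ∀ u ∈ 𝒰, W (uW - u_ref) (uW - u_ref) ≤ W (u - u_ref) (u - u_ref))
    (huStarmax : ∀ u ∈ 𝒰, Q u ≤ Q uStar)
    (Wh : EuclideanSpace ℝ (Fin m) →L[ℝ] EuclideanSpace ℝ (Fin m) →L[ℝ] ℝ)
    (hWhsym : ∀ v w : EuclideanSpace ℝ (Fin m), Wh v w = Wh w v)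
    (ρ : ℝ) (hρμ : ρ < μ ^ 2)
    (herr : ‖Wh - W‖ ≤ ρ)
    (huhWmin : ∀ u ∈ 𝒰,
      Wh (uhW - u_ref) (uhW - u_ref) ≤ Wh (u - u_ref) (u - u_ref))
    (huWS : uW ∈ S) (huhWS : uhW ∈ S) (huStarS : uStar ∈ S)
    (hseg : segment ℝ uW uhW ⊆ S) :
    |Q uhW - Q uStar| ≤
      L₂ * D ^ 3 / (3 * μ ^ 3) + G * Real.sqrt (2 * ρ) * D / μ ^ 2 := by
  have hρ : 0 ≤ ρ := (norm_nonneg (Wh - W)).trans herr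
  have hG : 0 ≤ G := (norm_nonneg _).trans (hGbound uW huWS)
  have hQ' (x) : HasFDerivAt Q (fderiv ℝ Q x) x := (hQ.differentiable two_ne_zero x).hasFDerivAt
  have hQ'' (x) : HasFDerivAt (fderiv ℝ Q) (H x) x :=
    hH x ▸ ((hQ.fderiv_right (m := 1) le_rfl).differentiable one_ne_zero x).hasFDerivAt
  have hWsymm (v w) : W v w = W w v := by
    simp only [hW, hH, neg_apply, hQ.contDiffAt.isSymmSndFDerivAt (by simp) v w]
  have hWcoer (v) : μ ^ 2 * ‖v‖ ^ 2 ≤ W v v := by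
    have := hcurv u_ref (by rw [hS]; simpa using sq_nonneg D) v
    simp only [hW, neg_apply]; linarith
  have hball {u} (hu : u ∈ S) : ‖u - u_ref‖ ≤ D / μ :=
    le_div_of_sq_mul_sq_le hμ hD.le (norm_nonneg _) ((hWcoer _).trans (by rwa [hS] at hu))
  have hgap : Q uStar - Q uW ≤ L₂ * D ^ 3 / (3 * μ ^ 3) := by
    have := sub_le_of_quadratic_model_le hQ' hQ'' (fun x ↦ hLip x u_ref) hL₂.le hgrad
      (hball huStarS) (hball huWS)
      (neg_le_neg_iff.1 (by simpa only [hW, neg_apply] using huWmin uStar huStar𝒰))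
    rwa [div_pow, mul_div_assoc', div_div, mul_comm (μ ^ 3)] at this
  have hdist : ‖uhW - uW‖ ≤ √(2 * ρ) * D / μ ^ 2 := by
    have := (mul_norm_sub_le_of_isMinOn_quadratic hWsymm hWhsym hWcoer h𝒰 huW𝒰 huhW𝒰
      (isMinOn_iff.2 huWmin) (isMinOn_iff.2 huhWmin)).trans
      (mul_le_mul herr (hball huhWS) (norm_nonneg _) hρ)
    rw [le_div_iff₀ (by positivity)]
    calc ‖uhW - uW‖ * μ ^ 2 ≤ ρ / μ * D := by rw [div_mul_eq_mul_div, mul_div_assoc]; linarith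
      _ ≤ √(2 * ρ) * D := by gcongr; exact div_le_sqrt_two_mul hρ hμ hρμ.le
  have hMV : |Q uhW - Q uW| ≤ G * ‖uhW - uW‖ := by
    simpa only [Real.norm_eq_abs] using
      (convex_segment uW uhW).norm_image_sub_le_of_norm_fderiv_le
        (fun x _ ↦ (hQ' x).differentiableAt) (fun x hx ↦ hGbound x (hseg hx))
        (left_mem_segment ℝ uW uhW) (right_mem_segment ℝ uW uhW)
  rw [abs_sub_comm, abs_of_nonneg (sub_nonneg.2 (huStarmax uhW huhW𝒰))]
  calc Q uStar - Q uhW = (Q uStar - Q uW) + (Q uW - Q uhW) := by ring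
    _ ≤ L₂ * D ^ 3 / (3 * μ ^ 3) + G * (√(2 * ρ) * D / μ ^ 2) :=
      add_le_add hgap (by linarith [abs_le.1 hMV, mul_le_mul_of_nonneg_left hdist hG])
    _ = _ := by ring

/-- Theorem 3: Near-optimality under training error. With A1–A2,
a gradient bound `G` on `𝒮`, and a learned symmetric weighting `Ŵ` with
`‖Ŵ − W‖ ≤ ρ < μ²`, the learned weighted projection `û_W` satisfies
`|Q(û_W) − Q(u⋆)| ≤ L₂D³/(3μ³) + G√(2ρ)D/μ²`. -/
theorem learned_weighted_projection_near_optimality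
    (m : ℕ)
    (Q : EuclideanSpace ℝ (Fin m) → ℝ)
    (hQ : ContDiff ℝ 2 Q)
    (u_ref : EuclideanSpace ℝ (Fin m))
    (H : EuclideanSpace ℝ (Fin m) →
      EuclideanSpace ℝ (Fin m) →L[ℝ] EuclideanSpace ℝ (Fin m) →L[ℝ] ℝ)
    (hH : ∀ u, H u = fderiv ℝ (fderiv ℝ Q) u)
    (L₂ : ℝ) (hL₂ : 0 < L₂)
    (hLip : ∀ u v, ‖H u - H v‖ ≤ L₂ * ‖u - v‖)
    (hgrad : fderiv ℝ Q u_ref = 0)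
    (W : EuclideanSpace ℝ (Fin m) →L[ℝ] EuclideanSpace ℝ (Fin m) →L[ℝ] ℝ)
    (hW : W = -H u_ref)
    (D : ℝ) (hD : 0 < D)
    (S : Set (EuclideanSpace ℝ (Fin m)))
    (hS : S = {u | W (u - u_ref) (u - u_ref) ≤ D ^ 2})
    (μ : ℝ) (hμ : 0 < μ)
    (hcurv : ∀ u ∈ S, ∀ v : EuclideanSpace ℝ (Fin m),
      H u v v ≤ -μ ^ 2 * ‖v‖ ^ 2)
    (G : ℝ) (hG0 : 0 ≤ G)
    (hGbound : ∀ u ∈ S, ‖fderiv ℝ Q u‖ ≤ G)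
    (𝒰 : Set (EuclideanSpace ℝ (Fin m))) (h𝒰 : Convex ℝ 𝒰)
    (uW uStar uhW : EuclideanSpace ℝ (Fin m))
    (huW𝒰 : uW ∈ 𝒰) (huStar𝒰 : uStar ∈ 𝒰) (huhW𝒰 : uhW ∈ 𝒰)
    (huWmin : ∀ u ∈ 𝒰, W (uW - u_ref) (uW - u_ref) ≤ W (u - u_ref) (u - u_ref))
    (huStarmax : ∀ u ∈ 𝒰, Q u ≤ Q uStar)
    (Wh : EuclideanSpace ℝ (Fin m) →L[ℝ] EuclideanSpace ℝ (Fin m) →L[ℝ] ℝ)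
    (hWhsym : ∀ v w : EuclideanSpace ℝ (Fin m), Wh v w = Wh w v)
    (ρ : ℝ) (hρ0 : 0 ≤ ρ) (hρμ : ρ < μ ^ 2)
    (herr : ‖Wh - W‖ ≤ ρ)
    (huhWmin : ∀ u ∈ 𝒰,
      Wh (uhW - u_ref) (uhW - u_ref) ≤ Wh (u - u_ref) (u - u_ref))
    (huWS : uW ∈ S) (huhWS : uhW ∈ S) (huStarS : uStar ∈ S)
    (hseg : segment ℝ uW uhW ⊆ S) :
    |Q uhW - Q uStar| ≤
      L₂ * D ^ 3 / (3 * μ ^ 3) + G * Real.sqrt (2 * ρ) * D / μ ^ 2 :=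
  learned_weighted_projection_near_optimality_general m Q hQ u_ref H hH L₂ hL₂ hLip hgrad W hW D hD
    S hS μ hμ hcurv G hGbound 𝒰 h𝒰 uW uStar uhW huW𝒰 huStar𝒰 huhW𝒰 huWmin huStarmax Wh hWhsym ρ hρμ
    herr huhWmin huWS huhWS huStarS hseg
end
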